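/- Let ⋆ be a continuous t-norm with residuum ⇒. For any s, e ∈ [0,1] with s > 0, and any imbalance truth value imb ≤ e, there exists f ∈ [0,1] such that s ⋆ (s ⇒ (s ⋆ e ⋆ (e ⇒ e_inf) ⋆ f)) = s ⋆ imb, where e_inf = inf { d ∈ [0,1] : s ⋆ d ≥ s ⋆ e }. -/
import Mathlib


/-- Theorem 1, existence of the standard form: for a continuous
t-norm ⋆ with residuum ⇒, s ∈ (0,1], e ∈ [0,1], and any imbalance truth value
`imb ≤ e`, there exists f ∈ [0,1] such that
`s ⋆ (s ⇒ (s ⋆ e ⋆ (e ⇒ e_inf) ⋆ f)) = s ⋆ imb`,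
where `e_inf = inf { d ∈ [0,1] : s ⋆ d ≥ s ⋆ e }`. -/
theorem exists_standard_form
    (star res : ℝ → ℝ → ℝ)
    (hmap : ∀ x ∈ Set.Icc (0:ℝ) 1, ∀ y ∈ Set.Icc (0:ℝ) 1, star x y ∈ Set.Icc (0:ℝ) 1)
    (hresmap : ∀ x ∈ Set.Icc (0:ℝ) 1, ∀ y ∈ Set.Icc (0:ℝ) 1, res x y ∈ Set.Icc (0:ℝ) 1)
    (hcomm : ∀ x ∈ Set.Icc (0:ℝ) 1, ∀ y ∈ Set.Icc (0:ℝ) 1, star x y = star y x)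
    (hassoc : ∀ x ∈ Set.Icc (0:ℝ) 1, ∀ y ∈ Set.Icc (0:ℝ) 1, ∀ z ∈ Set.Icc (0:ℝ) 1,
      star (star x y) z = star x (star y z))
    (hmono : ∀ x ∈ Set.Icc (0:ℝ) 1, ∀ y ∈ Set.Icc (0:ℝ) 1, ∀ z ∈ Set.Icc (0:ℝ) 1,
      x ≤ y → star z x ≤ star z y)
    (hone : ∀ x ∈ Set.Icc (0:ℝ) 1, star x 1 = x)
    (hcont : Continuous fun p : ℝ × ℝ => star p.1 p.2)
    (hadj : ∀ x ∈ Set.Icc (0:ℝ) 1, ∀ y ∈ Set.Icc (0:ℝ) 1, ∀ z ∈ Set.Icc (0:ℝ) 1,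
      star x y ≤ z ↔ x ≤ res y z)
    (s e imb : ℝ)
    (hs : s ∈ Set.Icc (0:ℝ) 1) (hspos : 0 < s)
    (he : e ∈ Set.Icc (0:ℝ) 1) (himb : imb ∈ Set.Icc (0:ℝ) 1) (hle : imb ≤ e) :
    ∃ f ∈ Set.Icc (0:ℝ) 1,
      star s (res s (star (star (star s e)
        (res e (sInf {d ∈ Set.Icc (0:ℝ) 1 | star s d ≥ star s e}))) f))
      = star s imb := by
  have h0 : (0:ℝ) ∈ Set.Icc (0:ℝ) 1 := by constructor <;> norm_num
  have h1 : (1:ℝ) ∈ Set.Icc (0:ℝ) 1 := by constructor <;> norm_num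
  -- star 0 y = 0 for y ∈ [0,1]
  have hzero : ∀ y ∈ Set.Icc (0:ℝ) 1, star 0 y = 0 := by
    intro y hy
    have hle0 : star 0 y ≤ 0 := by
      rw [hadj 0 h0 y hy 0 h0]
      exact (hresmap y hy 0 h0).1
    exact le_antisymm hle0 (hmap 0 h0 y hy).1
  set S : Set ℝ := {d ∈ Set.Icc (0:ℝ) 1 | star s d ≥ star s e} with hS
  have heS : e ∈ S := ⟨he, le_refl _⟩
  have hSne : S.Nonempty := ⟨e, heS⟩
  have hSbdd : BddBelow S := ⟨0, fun d hd => hd.1.1⟩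
  have hSclosed : IsClosed S := by
    have : S = Set.Icc (0:ℝ) 1 ∩ (fun d => star s d) ⁻¹' Set.Ici (star s e) := by
      ext d; simp [hS, Set.mem_setOf_eq, Set.mem_Ici, ge_iff_le, and_comm]
    rw [this]
    exact isClosed_Icc.inter (IsClosed.preimage (hcont.comp (continuous_const.prodMk continuous_id)) isClosed_Ici)
  set einf : ℝ := sInf S with heinf
  have heinfS : einf ∈ S := hSclosed.csInf_mem hSne hSbdd
  have heinf01 : einf ∈ Set.Icc (0:ℝ) 1 := heinfS.1
  have heinfle : einf ≤ e := csInf_le hSbdd heS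
  have hstarge : star s e ≤ star s einf := heinfS.2
  -- divisibility at e: star e (res e einf) = einf, via IVT
  have hconte : Continuous fun t : ℝ => star t e :=
    hcont.comp (continuous_id.prodMk continuous_const)
  have hivt : Set.Icc (star 0 e) (star 1 e) ⊆ (fun t : ℝ => star t e) '' Set.Icc 0 1 :=
    intermediate_value_Icc (by norm_num) hconte.continuousOn
  have hstar1e : star 1 e = e := by rw [hcomm 1 h1 e he, hone e he]
  have heinfmem : einf ∈ Set.Icc (star 0 e) (star 1 e) := by
    rw [hzero e he, hstar1e]; exact ⟨heinf01.1, heinfle⟩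
  obtain ⟨t, ht01, ht⟩ := hivt heinfmem
  have hres01 : res e einf ∈ Set.Icc (0:ℝ) 1 := hresmap e he einf heinf01
  have hdiv : star e (res e einf) = einf := by
    have hle1 : star (res e einf) e ≤ einf :=
      (hadj (res e einf) hres01 e he einf heinf01).mpr (le_refl _)
    have htle : t ≤ res e einf :=
      (hadj t ht01 e he einf heinf01).mp (le_of_eq ht)
    have hge1 : einf ≤ star e (res e einf) := by
      calc einf = star t e := ht.symm
        _ = star e t := hcomm t ht01 e he
        _ ≤ star e (res e einf) := hmono t ht01 (res e einf) hres01 e he htle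
    rw [hcomm (res e einf) hres01 e he] at hle1
    exact le_antisymm hle1 hge1
  -- A = star s einf
  have hse01 : star s e ∈ Set.Icc (0:ℝ) 1 := hmap s hs e he
  have hA : star (star s e) (res e einf) = star s einf := by
    rw [hassoc s hs e he (res e einf) hres01, hdiv]
  have hA01 : star (star s e) (res e einf) ∈ Set.Icc (0:ℝ) 1 := by
    rw [hA]; exact hmap s hs einf heinf01
  set A : ℝ := star (star s e) (res e einf) with hAdef
  -- star s imb ∈ [0, A]
  have hsimb01 : star s imb ∈ Set.Icc (0:ℝ) 1 := hmap s hs imb himb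
  have hsimbleA : star s imb ≤ A := by
    calc star s imb ≤ star s e := hmono imb himb e he s hs hle
      _ ≤ star s einf := hstarge
      _ = A := hA.symm
  -- IVT for f ↦ star A f
  have hcontA : Continuous fun f : ℝ => star A f :=
    hcont.comp (continuous_const.prodMk continuous_id)
  have hA0 : star A 0 = 0 := by
    rw [hcomm A hA01 0 h0]; exact hzero A hA01
  have hA1 : star A 1 = A := hone A hA01
  have hivt2 : Set.Icc (star A 0) (star A 1) ⊆ (fun f : ℝ => star A f) '' Set.Icc 0 1 :=
    intermediate_value_Icc (by norm_num) hcontA.continuousOn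
  have hmem2 : star s imb ∈ Set.Icc (star A 0) (star A 1) := by
    rw [hA0, hA1]; exact ⟨hsimb01.1, hsimbleA⟩
  obtain ⟨f, hf01, hf⟩ := hivt2 hmem2
  refine ⟨f, hf01, ?_⟩
  have hf' : star A f = star s imb := hf
  rw [hf']
  -- star s (res s (star s imb)) = star s imb
  have hres2 : res s (star s imb) ∈ Set.Icc (0:ℝ) 1 := hresmap s hs (star s imb) hsimb01
  have hle2 : star (res s (star s imb)) s ≤ star s imb :=
    (hadj (res s (star s imb)) hres2 s hs (star s imb) hsimb01).mpr (le_refl _)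
  rw [hcomm (res s (star s imb)) hres2 s hs] at hle2
  have hge2 : star s imb ≤ star s (res s (star s imb)) := by
    have himbres : imb ≤ res s (star s imb) := by
      rw [← hadj imb himb s hs (star s imb) hsimb01, hcomm imb himb s hs]
    exact hmono imb himb (res s (star s imb)) hres2 s hs himbres
  exact le_antisymm hle2 hge2
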